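/- Let d ≥ 1, μ > 0, λ > 0 and define the compliance operator 𝒜 on d×d real matrices by 𝒜τ = (1/(2μ))·(τ - (λ/(2μ + dλ))·(tr τ)·I). Then for every d×d matrix τ, ⟨𝒜τ, τ⟩_F ≥ (1/(2μ))·‖dev τ‖_F², where dev τ = τ - (tr τ/d)·I and ⟨·,·⟩_F is the Frobenius inner product. -/
import Mathlib


open Matrix

noncomputable def frobInner {d : ℕ} (A B : Matrix (Fin d) (Fin d) ℝ) : ℝ :=
  Matrix.trace (Aᵀ * B)

noncomputable def devPart {d : ℕ} (τ : Matrix (Fin d) (Fin d) ℝ) : Matrix (Fin d) (Fin d) ℝ :=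
  τ - (Matrix.trace τ / (d : ℝ)) • (1 : Matrix (Fin d) (Fin d) ℝ)

/-- The compliance operator 𝒜τ = (1/(2μ))(τ - (λ/(2μ+dλ))(tr τ)I). -/
noncomputable def compA {d : ℕ} (μ lam : ℝ) (τ : Matrix (Fin d) (Fin d) ℝ) :
    Matrix (Fin d) (Fin d) ℝ :=
  (1 / (2 * μ)) • (τ - (lam / (2 * μ + (d : ℝ) * lam)) • (Matrix.trace τ • (1 : Matrix (Fin d) (Fin d) ℝ)))

/-- ⟨𝒜τ, τ⟩_F ≥ (1/(2μ))·‖dev τ‖_F². -/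
theorem compA_ge_dev (d : ℕ) (hd : 1 ≤ d) (μ lam : ℝ) (hμ : 0 < μ) (hlam : 0 < lam)
    (τ : Matrix (Fin d) (Fin d) ℝ) :
    (1 / (2 * μ)) * frobInner (devPart τ) (devPart τ) ≤ frobInner (compA μ lam τ) τ := by
  have hd' : (0:ℝ) < d := by exact_mod_cast hd
  have hden : (0:ℝ) < 2 * μ + d * lam := by positivity
  simp only [frobInner, devPart, compA, transpose_sub, transpose_smul, transpose_one,
    Matrix.sub_mul, Matrix.smul_mul, Matrix.mul_sub, Matrix.mul_smul, Matrix.one_mul,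
    Matrix.mul_one, trace_sub, trace_smul, trace_transpose, trace_one, smul_eq_mul,
    Fintype.card_fin]
  set t := Matrix.trace τ
  set s := Matrix.trace (τᵀ * τ)
  have key : lam / (2 * μ + d * lam) * t * t ≤ t * t / d := by
    rw [div_mul_eq_mul_div, div_mul_eq_mul_div, div_le_div_iff₀ hden hd']
    nlinarith [sq_nonneg t]
  have h2μ : (0:ℝ) < 2 * μ := by linarith
  have hdne : (d:ℝ) ≠ 0 := ne_of_gt hd'
  apply mul_le_mul_of_nonneg_left _ (by positivity)
  rw [div_mul_cancel₀ t hdne]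
  have h3 : t / (d:ℝ) * t = t * t / (d:ℝ) := by ring
  linarith [key]
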